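/- arXiv:1503.01848 — 5 statements merged into one kernel-verified Lean document; each statement's English description precedes it below -/
import Mathlib

section
/- Let P be a symmetric positive definite n×n real matrix, W a symmetric positive definite m×m real matrix, A an m×n real matrix, and Π a symmetric n×n real matrix. Then the (n+m)×(n+m) block matrix [[P − Π, P Aᵀ], [A P, A P Aᵀ + W]] is positive semidefinite if and only if Π ⪯ (P⁻¹ + Aᵀ W⁻¹ A)⁻¹. -/
/-!
The lower-right block `A P Aᵀ + W` is positive definite, so the block matrix is positive
semidefinite iff its Schur complement `P - Π - P Aᵀ (A P Aᵀ + W)⁻¹ A P` is. By the Woodbury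
identity, `P - P Aᵀ (A P Aᵀ + W)⁻¹ A P = (P⁻¹ + Aᵀ W⁻¹ A)⁻¹`.
-/

open Matrix

namespace Matrix

variable {n m α : Type*} [Fintype n] [DecidableEq n] [Fintype m] [DecidableEq m] [CommRing α]

theorem inv_add_mul_inv_mul_eq_sub {P : Matrix n n α} {W : Matrix m m α}
    (U : Matrix n m α) (V : Matrix m n α) (hP : IsUnit P) (hW : IsUnit W)
    (hM : IsUnit (V * P * U + W)) :
    (P⁻¹ + U * W⁻¹ * V)⁻¹ = P - P * U * (V * P * U + W)⁻¹ * (V * P) := by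
  have hPP : P⁻¹⁻¹ = P := nonsing_inv_nonsing_inv P ((isUnit_iff_isUnit_det P).mp hP)
  have hWW : W⁻¹⁻¹ = W := nonsing_inv_nonsing_inv W ((isUnit_iff_isUnit_det W).mp hW)
  rw [add_mul_mul_inv_eq_sub _ _ _ _ (isUnit_nonsing_inv_iff.mpr hP)
    (isUnit_nonsing_inv_iff.mpr hW) (by rwa [hPP, hWW, add_comm]), hPP, hWW, add_comm W,
    Matrix.mul_assoc _ V P]

end Matrix

theorem stmt5_general {n m : ℕ}
    (P : Matrix (Fin n) (Fin n) ℝ) (W : Matrix (Fin m) (Fin m) ℝ)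
    (A : Matrix (Fin m) (Fin n) ℝ)
    (Pi : Matrix (Fin n) (Fin n) ℝ)
    (hP : P.PosDef) (hW : W.PosDef) :
    (Matrix.fromBlocks (P - Pi) (P * Aᵀ) (A * P) (A * P * Aᵀ + W)).PosSemidef ↔
      ((P⁻¹ + Aᵀ * W⁻¹ * A)⁻¹ - Pi).PosSemidef := by
  have hAPA : (A * P * Aᵀ).PosSemidef := by
    simpa using hP.posSemidef.mul_mul_conjTranspose_same A
  have hM : (A * P * Aᵀ + W).PosDef := PosDef.posSemidef_add hAPA hW
  have := hM.isUnit.invertible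
  have hB : (P * Aᵀ)ᴴ = A * P := by
    rw [conjTranspose_eq_transpose_of_trivial, transpose_mul, transpose_transpose,
      ← conjTranspose_eq_transpose_of_trivial, hP.isHermitian.eq]
  have hSchur := PosDef.fromBlocks₂₂ (P - Pi) (P * Aᵀ) hM
  rw [hB] at hSchur
  rw [hSchur, inv_add_mul_inv_mul_eq_sub Aᵀ A hP.isUnit hW.isUnit hM.isUnit, sub_right_comm]

/-- Schur-complement equivalence: the block matrix
`[[P − Π, P Aᵀ], [A P, A P Aᵀ + W]]` is positive semidefinite iff
`Π ⪯ (P⁻¹ + Aᵀ W⁻¹ A)⁻¹` in the Loewner order. (`Pi` plays the role of `Π`.) -/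
theorem stmt5 {n m : ℕ}
    (P : Matrix (Fin n) (Fin n) ℝ) (W : Matrix (Fin m) (Fin m) ℝ)
    (A : Matrix (Fin m) (Fin n) ℝ)
    (Pi : Matrix (Fin n) (Fin n) ℝ)
    (hP : P.PosDef) (hW : W.PosDef) (hPi : Pi.IsHermitian) :
    (Matrix.fromBlocks (P - Pi) (P * Aᵀ) (A * P) (A * P * Aᵀ + W)).PosSemidef ↔
      ((P⁻¹ + Aᵀ * W⁻¹ * A)⁻¹ - Pi).PosSemidef :=
  stmt5_general P W A Pi hP hW
end

section
/- Let P be a symmetric positive definite n×n real matrix, W a symmetric positive definite m×m real matrix, and A an m×n real matrix. Consider the set F of symmetric positive definite n×n matrices Π such that the block matrix [[P − Π, P Aᵀ], [A P, A P Aᵀ + W]] is positive semidefinite. Then the supremum of det Π over Π ∈ F equals det(P) · det(W) / det(A P Aᵀ + W), and it is attained at Π = (P⁻¹ + Aᵀ W⁻¹ A)⁻¹. -/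
/-!
The block constraint is a Schur-complement condition: since `S = A P Aᵀ + W ≻ 0`, it holds iff
`Π ⪯ P - P Aᵀ S⁻¹ A P`, and by the Woodbury identity the right-hand side is
`Π⋆ = (P⁻¹ + Aᵀ W⁻¹ A)⁻¹`. The feasible set is thus `{Π ≻ 0 | Π ⪯ Π⋆}`, which contains `Π⋆`, and
the determinant is monotone for the Loewner order (write `M = Π^{1/2} N Π^{1/2}` with `N ⪰ 1`), so
`det Π⋆` is the maximum. Its value follows from `det (1 + X Y) = det (1 + Y X)`.
-/

open Matrix

section Determinant

variable {n : Type*} [Fintype n] [DecidableEq n]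

lemma Matrix.IsHermitian.det_cfc {A : Matrix n n ℝ} (hA : A.IsHermitian) (f : ℝ → ℝ) :
    (cfc f A).det = ∏ i, f (hA.eigenvalues i) := by
  rw [hA.cfc_eq]
  simp [IsHermitian.cfc, -Unitary.conjStarAlgAut_apply]

lemma Matrix.PosSemidef.one_le_det_one_add {N : Matrix n n ℝ} (hN : N.PosSemidef) :
    1 ≤ (1 + N).det := by
  have : IsSelfAdjoint N := hN.1
  have hcfc : 1 + N = cfc (fun x : ℝ => 1 + x) N := by
    rw [cfc_const_add _ _ _, cfc_id' ℝ N, map_one]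
  rw [hcfc, hN.1.det_cfc]
  exact Finset.one_le_prod fun i _ => by linarith [hN.eigenvalues_nonneg i]

open scoped MatrixOrder

lemma Matrix.det_conjSqrt {c : Matrix n n ℝ} (hc : 0 ≤ c) (a : Matrix n n ℝ) :
    (CFC.conjSqrt c a).det = c.det * a.det := by
  rw [CFC.conjSqrt_apply, det_mul, det_mul, mul_right_comm, ← det_mul,
    CFC.sqrt_mul_sqrt_self c hc, mul_comm]

lemma Matrix.PosDef.det_le_det {Q M : Matrix n n ℝ} (hQ : Q.PosDef) (h : (M - Q).PosSemidef) :
    Q.det ≤ M.det := by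
  have : IsStrictlyPositive Q := isStrictlyPositive_iff_posDef.mpr hQ
  set N := CFC.conjSqrt (Ring.inverse Q) M
  have hN : 1 ≤ N := by
    rw [← CFC.conjSqrt_ringInverse_self Q]
    exact CFC.conjSqrt_le_conjSqrt h
  have hdetN : 1 ≤ N.det := by
    simpa only [add_sub_cancel] using (le_iff.mp hN).one_le_det_one_add
  rw [← CFC.conjSqrt_conjSqrt_ringInverse Q M, det_conjSqrt hQ.posSemidef.nonneg]
  exact le_mul_of_one_le_right hQ.det_pos.le hdetN

end Determinant

section Woodbury

variable {n m R : Type*} [Fintype n] [Fintype m] [DecidableEq n] [DecidableEq m]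

lemma Matrix.inv_inv_add_transpose_mul_inv_mul [CommRing R] {P : Matrix n n R}
    {W : Matrix m m R} (A : Matrix m n R) (hP : IsUnit P) (hW : IsUnit W)
    (hS : IsUnit (A * P * Aᵀ + W)) :
    (P⁻¹ + Aᵀ * W⁻¹ * A)⁻¹ = P - P * Aᵀ * (A * P * Aᵀ + W)⁻¹ * A * P := by
  have hPinv : P⁻¹⁻¹ = P := nonsing_inv_nonsing_inv P ((isUnit_iff_isUnit_det P).mp hP)
  have hWinv : W⁻¹⁻¹ = W := nonsing_inv_nonsing_inv W ((isUnit_iff_isUnit_det W).mp hW)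
  have hS' : IsUnit (W⁻¹⁻¹ + A * P⁻¹⁻¹ * Aᵀ) := by rwa [hPinv, hWinv, add_comm]
  rw [add_mul_mul_inv_eq_sub _ _ _ _ (isUnit_nonsing_inv_iff.mpr hP)
    (isUnit_nonsing_inv_iff.mpr hW) hS', hPinv, hWinv, add_comm W]

lemma Matrix.det_inv_add_transpose_mul_inv_mul [Field R] {P : Matrix n n R}
    {W : Matrix m m R} (A : Matrix m n R) (hP : P.det ≠ 0) (hW : W.det ≠ 0) :
    (P⁻¹ + Aᵀ * W⁻¹ * A).det = (A * P * Aᵀ + W).det / (P.det * W.det) := by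
  have hfactor : P⁻¹ + Aᵀ * W⁻¹ * A = P⁻¹ * (1 + P * Aᵀ * W⁻¹ * A) := by
    rw [Matrix.mul_add, Matrix.mul_one, ← Matrix.mul_assoc, ← Matrix.mul_assoc,
      ← Matrix.mul_assoc, nonsing_inv_mul P (isUnit_iff_ne_zero.mpr hP), Matrix.one_mul]
  have hswap : 1 + A * (P * Aᵀ * W⁻¹) = (A * P * Aᵀ + W) * W⁻¹ := by
    rw [Matrix.add_mul, mul_nonsing_inv W (isUnit_iff_ne_zero.mpr hW), add_comm]
    simp only [Matrix.mul_assoc]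
  rw [hfactor, det_mul, det_nonsing_inv, det_one_add_mul_comm, hswap, det_mul, det_nonsing_inv,
    Ring.inverse_eq_inv']
  field_simp

end Woodbury

section SchurComplement

variable {n m : Type*} [Fintype n] [Fintype m] {P : Matrix n n ℝ} {W : Matrix m m ℝ}

lemma Matrix.PosSemidef.mul_mul_transpose_add (A : Matrix m n ℝ) (hP : P.PosSemidef)
    (hW : W.PosDef) : (A * P * Aᵀ + W).PosDef := by
  have hAPAt := hP.mul_mul_conjTranspose_same A
  rw [conjTranspose_eq_transpose_of_trivial] at hAPAt
  exact PosDef.posSemidef_add hAPAt hW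

variable [DecidableEq n] [DecidableEq m]

lemma Matrix.PosDef.inv_add_transpose_mul_inv_mul (A : Matrix m n ℝ) (hP : P.PosDef)
    (hW : W.PosSemidef) : (P⁻¹ + Aᵀ * W⁻¹ * A).PosDef := by
  have hAtWA := hW.inv.conjTranspose_mul_mul_same A
  rw [conjTranspose_eq_transpose_of_trivial] at hAtWA
  exact hP.inv.add_posSemidef hAtWA

lemma Matrix.PosDef.fromBlocks_posSemidef_iff (A : Matrix m n ℝ) (hP : P.PosDef)
    (hW : W.PosDef) (Q : Matrix n n ℝ) :
    (fromBlocks (P - Q) (P * Aᵀ) (A * P) (A * P * Aᵀ + W)).PosSemidef ↔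
      ((P⁻¹ + Aᵀ * W⁻¹ * A)⁻¹ - Q).PosSemidef := by
  have hS := hP.posSemidef.mul_mul_transpose_add A hW
  have := hS.isUnit.invertible
  have hPAt : (P * Aᵀ)ᴴ = A * P := by
    rw [conjTranspose_mul, hP.isHermitian.eq, conjTranspose_eq_transpose_of_trivial,
      transpose_transpose]
  have hSchur := PosDef.fromBlocks₂₂ (P - Q) (P * Aᵀ) hS
  rw [hPAt] at hSchur
  rw [hSchur, inv_inv_add_transpose_mul_inv_mul A hP.isUnit hW.isUnit hS.isUnit]
  simp only [Matrix.mul_assoc, sub_right_comm]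

end SchurComplement

/-- Variational (max-det) characterization: over all symmetric positive definite `Π`
such that `[[P − Π, P Aᵀ], [A P, A P Aᵀ + W]] ⪰ 0`, the supremum of `det Π` equals
`det P · det W / det(A P Aᵀ + W)`, attained at `Π = (P⁻¹ + Aᵀ W⁻¹ A)⁻¹`.
(`Pi` plays the role of `Π`.) -/
theorem stmt6 {n m : ℕ}
    (P : Matrix (Fin n) (Fin n) ℝ) (W : Matrix (Fin m) (Fin m) ℝ)
    (A : Matrix (Fin m) (Fin n) ℝ)
    (hP : P.PosDef) (hW : W.PosDef)
    (F : Set (Matrix (Fin n) (Fin n) ℝ))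
    (hF : F = {Pi | Pi.PosDef ∧
      (Matrix.fromBlocks (P - Pi) (P * Aᵀ) (A * P) (A * P * Aᵀ + W)).PosSemidef}) :
    IsGreatest (Matrix.det '' F) (P.det * W.det / (A * P * Aᵀ + W).det) ∧
    (P⁻¹ + Aᵀ * W⁻¹ * A)⁻¹ ∈ F ∧
    ((P⁻¹ + Aᵀ * W⁻¹ * A)⁻¹).det = P.det * W.det / (A * P * Aᵀ + W).det := by
  have hdet : ((P⁻¹ + Aᵀ * W⁻¹ * A)⁻¹).det = P.det * W.det / (A * P * Aᵀ + W).det := by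
    rw [det_nonsing_inv, Ring.inverse_eq_inv',
      det_inv_add_transpose_mul_inv_mul A hP.det_pos.ne' hW.det_pos.ne', inv_div]
  have hmem : (P⁻¹ + Aᵀ * W⁻¹ * A)⁻¹ ∈ F := by
    rw [hF]
    refine ⟨(hP.inv_add_transpose_mul_inv_mul A hW.posSemidef).inv, ?_⟩
    rw [hP.fromBlocks_posSemidef_iff A hW, sub_self]
    exact PosSemidef.zero
  refine ⟨⟨⟨_, hmem, hdet⟩, ?_⟩, hmem, hdet⟩
  rintro _ ⟨Q, hQ, rfl⟩
  rw [hF] at hQ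
  rw [← hdet]
  exact hQ.1.det_le_det ((hP.fromBlocks_posSemidef_iff A hW Q).mp hQ.2)
end

section
/- Let P be a symmetric positive definite n×n real matrix, V a symmetric positive definite r×r real matrix, and C an r×n real matrix. Define the Kalman gain L = P Cᵀ (C P Cᵀ + V)⁻¹. Then (I − L C) P = (P⁻¹ + Cᵀ V⁻¹ C)⁻¹; in particular (I − L C) P is symmetric positive definite. -/
open Matrix

/-- The Kalman gain `L = P Cᵀ (C P Cᵀ + V)⁻¹` achieves the posterior covariance:
`(I − L C) P = (P⁻¹ + Cᵀ V⁻¹ C)⁻¹`, which is symmetric positive definite. -/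
theorem stmt9 {n r : ℕ}
    (P : Matrix (Fin n) (Fin n) ℝ) (V : Matrix (Fin r) (Fin r) ℝ)
    (C : Matrix (Fin r) (Fin n) ℝ)
    (hP : P.PosDef) (hV : V.PosDef)
    (L : Matrix (Fin n) (Fin r) ℝ)
    (hL : L = P * Cᵀ * (C * P * Cᵀ + V)⁻¹) :
    (1 - L * C) * P = (P⁻¹ + Cᵀ * V⁻¹ * C)⁻¹ ∧ ((1 - L * C) * P).PosDef := by
  have hCT : Cᵀ = Cᴴ := by
    ext i j; simp [conjTranspose]
  have hCPC : (C * P * Cᵀ).PosSemidef := by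
    rw [show C * P * Cᵀ = C * P * Cᴴ by rw [hCT]]
    exact hP.posSemidef.mul_mul_conjTranspose_same C
  have hS : (C * P * Cᵀ + V).PosDef := Matrix.PosDef.posSemidef_add hCPC hV
  have hM : (P⁻¹ + Cᵀ * V⁻¹ * C).PosDef := by
    refine hP.inv.add_posSemidef ?_
    have : (Cᵀ * V⁻¹ * (Cᵀ)ᴴ).PosSemidef := hV.inv.posSemidef.mul_mul_conjTranspose_same Cᵀ
    simpa [← hCT, transpose_transpose] using this
  have hPP : P * P⁻¹ = 1 := mul_nonsing_inv P hP.det_pos.ne'.isUnit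
  have hVV : V * V⁻¹ = 1 := mul_nonsing_inv V hV.det_pos.ne'.isUnit
  have hSS : (C * P * Cᵀ + V)⁻¹ * (C * P * Cᵀ + V) = 1 :=
    nonsing_inv_mul _ hS.det_pos.ne'.isUnit
  set S := (C * P * Cᵀ + V)⁻¹ with hSdef
  have hkey : S * (C * P * Cᵀ) = 1 - S * V := by
    have h : C * P * Cᵀ = (C * P * Cᵀ + V) - V := (add_sub_cancel_right _ _).symm
    rw [h, Matrix.mul_sub, hSS]
  have key2 : S * (C * (P * (Cᵀ * (V⁻¹ * C)))) = V⁻¹ * C - S * (V * (V⁻¹ * C)) := by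
    have h := congrArg (· * (V⁻¹ * C)) hkey
    simpa only [Matrix.mul_assoc, Matrix.sub_mul, Matrix.one_mul] using h
  have key3 : V * (V⁻¹ * C) = C := by rw [← Matrix.mul_assoc, hVV, Matrix.one_mul]
  have hone : ((1 - L * C) * P) * (P⁻¹ + Cᵀ * V⁻¹ * C) = 1 := by
    subst hL
    simp only [Matrix.sub_mul, Matrix.add_mul, Matrix.mul_add, Matrix.one_mul,
      Matrix.mul_one, Matrix.mul_assoc, hPP, key2, key3, Matrix.mul_sub]
    abel
  have heq : (1 - L * C) * P = (P⁻¹ + Cᵀ * V⁻¹ * C)⁻¹ :=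
    (inv_eq_left_inv hone).symm
  exact ⟨heq, heq ▸ hM.inv⟩
end

section
/- Fix T ≥ 1, a real number ε > 0, n×n real matrices A₁,…,A_{T−1}, symmetric positive definite n×n matrices W₁,…,W_{T−1}, and a symmetric positive definite n×n matrix P₀. Consider the set F of tuples (P₁,…,P_T, Π₁,…,Π_T) of symmetric n×n real matrices satisfying: Π_t ⪰ ε I for all t = 1,…,T; P₁ ⪯ P₀; P_T = Π_T; P_{t+1} ⪯ A_t P_t A_tᵀ + W_t for t = 1,…,T−1; and the block matrix [[P_t − Π_t, P_t A_tᵀ], [A_t P_t, W_t + A_t P_t A_tᵀ]] is positive semidefinite for t = 1,…,T−1. Then F is a compact subset of the space of tuples of symmetric n×n matrices. -/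
/-!
The feasible set is cut out by finitely many conditions `f(P, Π) ⪰ 0` and `f(P, Π) = g(P, Π)`
with continuous `f`, `g`, and the PSD cone is closed, so the set is closed. It is bounded in the
Loewner order: the upper-left block of the LMI gives `Π_t ⪯ P_t` (and `P_T = Π_T`), so
`ε I ⪯ Π_t ⪯ P_t`; propagating `P₁ ⪯ P₀` through `P_{t+1} ⪯ A_t P_t A_tᵀ + W_t`, using that
congruence preserves `⪯`, bounds `P_t` by the open-loop covariance. Loewner intervals are compact,
since a PSD matrix has all its entries bounded by its trace.
-/

open Matrix
open scoped MatrixOrder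

namespace Matrix

variable {m : Type*}

theorem isClosed_setOf_isHermitian {R : Type*} [TopologicalSpace R] [T2Space R] [Star R]
    [ContinuousStar R] : IsClosed {M : Matrix m m R | M.IsHermitian} :=
  isClosed_eq (by fun_prop) continuous_id

theorem PosSemidef.toBlocks₁₁ {n R : Type*} [Ring R] [PartialOrder R] [StarRing R]
    {M : Matrix (m ⊕ n) (m ⊕ n) R} (hM : M.PosSemidef) : M.toBlocks₁₁.PosSemidef :=
  hM.submatrix Sum.inl

variable [Fintype m]

theorem isClosed_setOf_posSemidef : IsClosed {M : Matrix m m ℝ | M.PosSemidef} := by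
  simp only [posSemidef_iff_dotProduct_mulVec, Set.ofPred_and, Set.ofPred_forall]
  exact isClosed_setOf_isHermitian.inter
    (isClosed_iInter fun _ => isClosed_le continuous_const (by fun_prop))

theorem PosSemidef.two_mul_abs_apply_le {M : Matrix m m ℝ} (hM : M.PosSemidef) (a b : m) :
    2 * |M a b| ≤ M a a + M b b := by
  classical
  have hplus := hM.dotProduct_mulVec_nonneg (Pi.single a 1 + Pi.single b 1)
  have hminus := hM.dotProduct_mulVec_nonneg (Pi.single a 1 - Pi.single b 1)
  have hsymm : M b a = M a b := hM.isHermitian.apply a b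
  simp only [star_trivial, mulVec_add, mulVec_sub, dotProduct_add, dotProduct_sub,
    add_dotProduct, sub_dotProduct, mulVec_single_one, single_one_dotProduct, col_apply]
    at hplus hminus
  rcases abs_cases (M a b) with ⟨h, -⟩ | ⟨h, -⟩ <;> linarith

theorem PosSemidef.abs_apply_le_trace {M : Matrix m m ℝ} (hM : M.PosSemidef) (a b : m) :
    |M a b| ≤ M.trace := by
  have hdiag (c : m) : M c c ≤ M.trace :=
    Finset.single_le_sum (f := fun c => M c c) (fun c _ => hM.diag_nonneg) (Finset.mem_univ c)
  linarith [hM.two_mul_abs_apply_le a b, hdiag a, hdiag b]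

instance : CompactIccSpace (Matrix m m ℝ) where
  isCompact_Icc {L U} := by
    set c := (U - L).trace
    have hbox : IsCompact (Set.univ.pi fun a => Set.univ.pi fun b =>
        Set.Icc (L a b - c) (L a b + c)) :=
      isCompact_univ_pi fun a => isCompact_univ_pi fun b => isCompact_Icc
    refine hbox.of_isClosed_subset ?_ ?_
    · exact (isClosed_setOf_posSemidef.preimage (by fun_prop)).inter
        (isClosed_setOf_posSemidef.preimage (by fun_prop))
    · intro (X : Matrix m m ℝ) ⟨hLX, hXU⟩ a _ b _
      have htrace : (X - L).trace ≤ c := by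
        have := PosSemidef.trace_nonneg (le_iff.mp hXU)
        simp only [c, trace_sub] at this ⊢
        linarith
      have := ((le_iff.mp hLX).abs_apply_le_trace a b).trans htrace
      rw [sub_apply, abs_le] at this
      constructor <;> linarith

def openLoopCovariance (A W : ℕ → Matrix m m ℝ) (P₀ : Matrix m m ℝ) : ℕ → Matrix m m ℝ
  | 0 => P₀
  | k + 1 => A (k + 1) * openLoopCovariance A W P₀ k * (A (k + 1))ᵀ + W (k + 1)

theorem le_openLoopCovariance {T : ℕ} (hT : 0 < T) {A W : ℕ → Matrix m m ℝ}
    {P₀ : Matrix m m ℝ} {P : Fin T → Matrix m m ℝ} (h0 : P ⟨0, hT⟩ ≤ P₀)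
    (hstep : ∀ i (h : i + 1 < T),
      P ⟨i + 1, h⟩ ≤ A (i + 1) * P ⟨i, Nat.lt_of_succ_lt h⟩ * (A (i + 1))ᵀ + W (i + 1))
    (i : Fin T) : P i ≤ openLoopCovariance A W P₀ i := by
  suffices ∀ k (hk : k < T), P ⟨k, hk⟩ ≤ openLoopCovariance A W P₀ k from this i i.2
  intro k
  induction k with
  | zero => exact fun _ => h0
  | succ k ih =>
    intro hk
    have hconj := star_right_conjugate_le_conjugate (ih (by omega)) (A (k + 1))
    rw [star_eq_conjTranspose, conjTranspose_eq_transpose_of_trivial] at hconj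
    exact (hstep k hk).trans (add_le_add_left hconj _)

end Matrix

/-- Compactness of the feasible set of the covariance-scheduling max-det problem.
Times `t = 1, …, T` are indexed by `Fin T` (index `i` corresponds to time `i + 1`),
and `A t`, `W t` denote the data `A_t`, `W_t` for `t = 1, …, T−1`.
`PQ.1` is the tuple `(P₁, …, P_T)` and `PQ.2` is `(Π₁, …, Π_T)`. -/
theorem stmt10 {n : ℕ} (T : ℕ) (hT : 1 ≤ T) (ε : ℝ)
    (A W : ℕ → Matrix (Fin n) (Fin n) ℝ)
    (P₀ : Matrix (Fin n) (Fin n) ℝ) :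
    IsCompact {PQ : (Fin T → Matrix (Fin n) (Fin n) ℝ) × (Fin T → Matrix (Fin n) (Fin n) ℝ) |
      (∀ i, (PQ.1 i).IsHermitian) ∧ (∀ i, (PQ.2 i).IsHermitian) ∧
      (∀ i, (PQ.2 i - ε • (1 : Matrix (Fin n) (Fin n) ℝ)).PosSemidef) ∧
      (P₀ - PQ.1 ⟨0, hT⟩).PosSemidef ∧
      PQ.1 ⟨T - 1, by omega⟩ = PQ.2 ⟨T - 1, by omega⟩ ∧
      (∀ i : ℕ, ∀ h : i + 1 < T,
        (A (i + 1) * PQ.1 ⟨i, by omega⟩ * (A (i + 1))ᵀ + W (i + 1)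
          - PQ.1 ⟨i + 1, h⟩).PosSemidef) ∧
      (∀ i : ℕ, ∀ h : i + 1 < T,
        (Matrix.fromBlocks
          (PQ.1 ⟨i, by omega⟩ - PQ.2 ⟨i, by omega⟩)
          (PQ.1 ⟨i, by omega⟩ * (A (i + 1))ᵀ)
          (A (i + 1) * PQ.1 ⟨i, by omega⟩)
          (W (i + 1) + A (i + 1) * PQ.1 ⟨i, by omega⟩ * (A (i + 1))ᵀ)).PosSemidef)} := by
  set B := openLoopCovariance A W P₀
  have hbox : IsCompact (Set.univ.pi fun i : Fin T => Set.Icc (ε • 1) (B i)) :=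
    isCompact_univ_pi fun _ => isCompact_Icc
  refine (hbox.prod hbox).of_isClosed_subset ?_ ?_
  · simp only [Set.ofPred_and, Set.ofPred_forall]
    refine .inter ?_ (.inter ?_ (.inter ?_ (.inter ?_ (.inter ?_ (.inter ?_ ?_)))))
    · exact isClosed_iInter fun _ => isClosed_setOf_isHermitian.preimage (by fun_prop)
    · exact isClosed_iInter fun _ => isClosed_setOf_isHermitian.preimage (by fun_prop)
    · exact isClosed_iInter fun _ => isClosed_setOf_posSemidef.preimage (by fun_prop)
    · exact isClosed_setOf_posSemidef.preimage (by fun_prop)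
    · exact isClosed_eq (by fun_prop) (by fun_prop)
    · exact isClosed_iInter fun _ => isClosed_iInter fun _ =>
        isClosed_setOf_posSemidef.preimage (by fun_prop)
    · exact isClosed_iInter fun _ => isClosed_iInter fun _ =>
        isClosed_setOf_posSemidef.preimage (by fun_prop)
  · rintro ⟨P, Q⟩ ⟨-, -, hεQ, h0, hlast, hstep, hblock⟩
    have hQP (i : Fin T) : Q i ≤ P i := by
      by_cases hi : i.1 + 1 < T
      · simpa [le_iff] using (hblock i hi).toBlocks₁₁
      · rw [show i = ⟨T - 1, by omega⟩ from Fin.ext (by dsimp only; omega)]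
        exact hlast.ge
    have hPB := le_openLoopCovariance hT h0 hstep
    have hεQ' (i : Fin T) : ε • 1 ≤ Q i := le_iff.mpr (hεQ i)
    exact ⟨fun i _ => ⟨(hεQ' i).trans (hQP i), hPB i⟩, fun i _ => ⟨hεQ' i, (hQP i).trans (hPB i)⟩⟩
end

section
/- Let (Ω, ℱ, μ) be a probability space and 𝒢 ⊆ ℱ a sub-σ-algebra. Let x : Ω → ℝⁿ be square-integrable, K an m×n real matrix, and M a symmetric positive semidefinite m×m real matrix. Then for every 𝒢-measurable square-integrable u : Ω → ℝᵐ, E[(u − K x)ᵀ M (u − K x)] ≥ E[(K(x − E[x | 𝒢]))ᵀ M (K(x − E[x | 𝒢]))], and equality holds when u = K · E[x | 𝒢] (almost everywhere), where E[x | 𝒢] denotes the conditional expectation of x given 𝒢. -/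
/-!
Put `y = K x`. Conditional expectation commutes with `K`, so `K (x - E[x|𝒢]) = y - E[y|𝒢]`.
For `𝒢`-measurable `u`, the pull-out property makes `u - E[y|𝒢]` orthogonal to `y - E[y|𝒢]`
for the symmetric form `(a, b) ↦ a ⬝ᵥ M *ᵥ b`, so with `q a = a ⬝ᵥ M *ᵥ a` the expected cost
`E[q(u - y)]` splits as `E[q(u - E[y|𝒢])] + E[q(y - E[y|𝒢])]`, whose first summand is
nonnegative since `M ⪰ 0`.
-/

open Matrix MeasureTheory

section ConditionalExpectation

variable {Ω E F : Type*} {m mΩ : MeasurableSpace Ω} {μ : Measure Ω}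
  [NormedAddCommGroup E] [NormedSpace ℝ E] [NormedAddCommGroup F] [NormedSpace ℝ F]

theorem ContinuousLinearMap.integrable_of_bilin_of_memLp_two {G : Type*} [NormedAddCommGroup G]
    [NormedSpace ℝ G] (B : E →L[ℝ] F →L[ℝ] G) {f : Ω → E} {g : Ω → F}
    (hf : MemLp f 2 μ) (hg : MemLp g 2 μ) : Integrable (fun ω ↦ B (f ω) (g ω)) μ :=
  memLp_one_iff_integrable.1 (B.memLp_of_bilin 1 hf hg)

variable [CompleteSpace F] [IsFiniteMeasure μ]

theorem integral_bilin_sub_condExp_eq_zero (hm : m ≤ mΩ) (B : E →L[ℝ] F →L[ℝ] ℝ)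
    {f : Ω → E} {g : Ω → F} (hf : StronglyMeasurable[m] f) (hf₂ : MemLp f 2 μ)
    (hg : MemLp g 2 μ) :
    ∫ ω, B (f ω) (g ω - μ[g|m] ω) ∂μ = 0 := by
  have hfg := B.integrable_of_bilin_of_memLp_two hf₂ hg
  have hpull : ∫ ω, B (f ω) (μ[g|m] ω) ∂μ = ∫ ω, B (f ω) (g ω) ∂μ := by
    rw [← integral_condExp hm (f := fun ω ↦ B (f ω) (g ω)), integral_congr_ae
      (condExp_bilin_of_stronglyMeasurable_left B hf hfg (hg.integrable one_le_two))]
  simp_rw [map_sub]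
  rw [integral_sub hfg (B.integrable_of_bilin_of_memLp_two hf₂ (hg.condExp one_le_two)),
    hpull, sub_self]

/-- Pythagoras in `L²`: `u - μ[y|m]` is `m`-measurable, hence `B`-orthogonal to `y - μ[y|m]`. -/
theorem integral_bilin_sub_eq_add_of_stronglyMeasurable (hm : m ≤ mΩ) (B : F →L[ℝ] F →L[ℝ] ℝ)
    (hB : ∀ a b, B a b = B b a) {u y : Ω → F} (hu : StronglyMeasurable[m] u)
    (hu₂ : MemLp u 2 μ) (hy : MemLp y 2 μ) :
    ∫ ω, B (u ω - y ω) (u ω - y ω) ∂μ =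
      ∫ ω, B (u ω - μ[y|m] ω) (u ω - μ[y|m] ω) ∂μ +
        ∫ ω, B (y ω - μ[y|m] ω) (y ω - μ[y|m] ω) ∂μ := by
  set v := fun ω ↦ u ω - μ[y|m] ω
  set e := fun ω ↦ y ω - μ[y|m] ω
  have hv : MemLp v 2 μ := hu₂.sub (hy.condExp one_le_two)
  have he : MemLp e 2 μ := hy.sub (hy.condExp one_le_two)
  have hvv := B.integrable_of_bilin_of_memLp_two hv hv
  have hee := B.integrable_of_bilin_of_memLp_two he he
  have hve := B.integrable_of_bilin_of_memLp_two hv he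
  have hexpand (a b : F) : B (a - b) (a - b) = B a a + B b b - 2 * B a b := by
    rw [map_sub, map_sub, _root_.sub_apply, _root_.sub_apply, hB b a]
    ring
  have hcross : ∫ ω, B (v ω) (e ω) ∂μ = 0 :=
    integral_bilin_sub_condExp_eq_zero hm B (hu.sub stronglyMeasurable_condExp) hv hy
  calc ∫ ω, B (u ω - y ω) (u ω - y ω) ∂μ
      = ∫ ω, B (v ω) (v ω) + B (e ω) (e ω) - 2 * B (v ω) (e ω) ∂μ := by
        refine integral_congr_ae (ae_of_all _ fun ω ↦ ?_)
        dsimp only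
        rw [← sub_sub_sub_cancel_right (u ω) (y ω) (μ[y|m] ω), hexpand]
    _ = ∫ ω, B (v ω) (v ω) ∂μ + ∫ ω, B (e ω) (e ω) ∂μ - 2 * ∫ ω, B (v ω) (e ω) ∂μ := by
        rw [integral_sub (f := fun ω ↦ B (v ω) (v ω) + B (e ω) (e ω)) (hvv.add hee)
          (hve.const_mul 2), integral_add hvv hee,
          integral_const_mul]
    _ = ∫ ω, B (v ω) (v ω) ∂μ + ∫ ω, B (e ω) (e ω) ∂μ := by
        rw [hcross, mul_zero, sub_zero]

theorem integral_bilin_sub_condExp_le (hm : m ≤ mΩ) (B : F →L[ℝ] F →L[ℝ] ℝ)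
    (hB : ∀ a b, B a b = B b a) (hB₀ : ∀ a, 0 ≤ B a a) {u y : Ω → F}
    (hu : StronglyMeasurable[m] u) (hu₂ : MemLp u 2 μ) (hy : MemLp y 2 μ) :
    ∫ ω, B (y ω - μ[y|m] ω) (y ω - μ[y|m] ω) ∂μ ≤ ∫ ω, B (u ω - y ω) (u ω - y ω) ∂μ := by
  rw [integral_bilin_sub_eq_add_of_stronglyMeasurable hm B hB hu hu₂ hy]
  exact le_add_of_nonneg_left (integral_nonneg fun ω ↦ hB₀ _)

end ConditionalExpectation

section Matrix

variable {ι κ : Type*} [Fintype ι] [Fintype κ]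

theorem Matrix.IsHermitian.dotProduct_mulVec_comm {M : Matrix ι ι ℝ} (hM : M.IsHermitian)
    (a b : ι → ℝ) : a ⬝ᵥ M *ᵥ b = b ⬝ᵥ M *ᵥ a := by
  rw [← dotProduct_transpose_mulVec, ← conjTranspose_eq_transpose_of_trivial, hM.eq]

theorem Matrix.mulVec_condExp_comm {Ω : Type*} {m mΩ : MeasurableSpace Ω} {μ : Measure Ω}
    {x : Ω → κ → ℝ} (hx : Integrable x μ) (K : Matrix ι κ ℝ) :
    (fun ω ↦ K *ᵥ μ[x|m] ω) =ᵐ[μ] μ[fun ω ↦ K *ᵥ x ω|m] :=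
  (Matrix.mulVecLin K).toContinuousLinearMap.comp_condExp_comm hx

end Matrix

/-- Projection property of conditional expectation: among `𝒢`-measurable
square-integrable controls `u`, the expected weighted quadratic error
`E[(u − K x)ᵀ M (u − K x)]` is minimized by the certainty-equivalence control
`u = K · E[x | 𝒢]`, with minimum value `E[(K(x − E[x|𝒢]))ᵀ M (K(x − E[x|𝒢]))]`. -/
theorem stmt12 {n m : ℕ} {Ω : Type*} {mΩ : MeasurableSpace Ω}
    (μ : Measure Ω) [IsProbabilityMeasure μ]
    (mG : MeasurableSpace Ω) (hmG : mG ≤ mΩ)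
    (x : Ω → Fin n → ℝ) (hx : MemLp x 2 μ)
    (K : Matrix (Fin m) (Fin n) ℝ)
    (M : Matrix (Fin m) (Fin m) ℝ) (hM : M.PosSemidef) :
    (∀ u : Ω → Fin m → ℝ, StronglyMeasurable[mG] u → MemLp u 2 μ →
      ∫ ω, (u ω - K *ᵥ x ω) ⬝ᵥ M *ᵥ (u ω - K *ᵥ x ω) ∂μ ≥
        ∫ ω, (K *ᵥ (x ω - (μ[x|mG]) ω)) ⬝ᵥ M *ᵥ (K *ᵥ (x ω - (μ[x|mG]) ω)) ∂μ) ∧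
    (∫ ω, ((K *ᵥ (μ[x|mG]) ω) - K *ᵥ x ω) ⬝ᵥ M *ᵥ ((K *ᵥ (μ[x|mG]) ω) - K *ᵥ x ω) ∂μ =
      ∫ ω, (K *ᵥ (x ω - (μ[x|mG]) ω)) ⬝ᵥ M *ᵥ (K *ᵥ (x ω - (μ[x|mG]) ω)) ∂μ) := by
  set B := (Matrix.toBilin' M).toContinuousBilinearMap
  have hB (a b : Fin m → ℝ) : B a b = a ⬝ᵥ M *ᵥ b := toBilin'_apply' M a b
  have hKx : MemLp (fun ω ↦ K *ᵥ x ω) 2 μ :=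
    (Matrix.mulVecLin K).toContinuousLinearMap.comp_memLp' hx
  refine ⟨fun u hu hu₂ ↦ ?_, integral_congr_ae (ae_of_all _ fun ω ↦ ?_)⟩
  · have hcost := integral_bilin_sub_condExp_le hmG B
      (fun a b ↦ by rw [hB, hB, hM.isHermitian.dotProduct_mulVec_comm])
      (fun a ↦ by simpa [hB] using hM.dotProduct_mulVec_nonneg a) hu hu₂ hKx
    simp only [hB] at hcost
    refine le_of_eq_of_le (integral_congr_ae ?_) hcost
    filter_upwards [mulVec_condExp_comm (hx.integrable one_le_two) K] with ω hω
    rw [mulVec_sub, hω]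
  · dsimp only
    rw [← neg_sub, ← mulVec_sub, mulVec_neg, neg_dotProduct, dotProduct_neg, neg_neg]
end
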